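/- Let d ≥ 2 be an even integer, f, g₁, …, g_m ∈ ℝ[x₁,…,xₙ] of degree ≤ d, λ ∈ [0,∞)^m, and set G(λ) := f − Σ_{j=1}^m λ_j g_j. If z is G(λ)-feasible, then for every x ∈ K_g := {x ∈ ℝⁿ : g_j(x) ≥ 0, j = 1,…,m} one has f(x) ≥ G(λ)(0) − obj_{G(λ)}(z). Consequently s(f,g) := sup{G(λ)_gp : λ ∈ [0,∞)^m} is a lower bound for f on K_g. -/
import Mathlib


open MvPolynomial Finset

noncomputable section

/-- The weight `|α| = Σᵢ αᵢ` of a multi-exponent. -/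
def wt {n : ℕ} (α : Fin n →₀ ℕ) : ℕ := α.sum fun _ e => e

/-- `Δ(f)`: exponents `α` with `|α| ≤ d`, `f_α ≠ 0`, `α ∉ {0, d·e₁, …, d·eₙ}`, and
`f_α x^α` not a square in `ℝ[x]` (equivalently `f_α < 0` or some `αᵢ` odd). -/
def Delta {n : ℕ} (d : ℕ) (f : MvPolynomial (Fin n) ℝ) : Finset (Fin n →₀ ℕ) :=
  f.support.filter fun α =>
    wt α ≤ d ∧ α ≠ 0 ∧ (∀ i, α ≠ Finsupp.single i d) ∧
      (f.coeff α < 0 ∨ ∃ i, Odd (α i))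

/-- `z` is an `h`-feasible family. -/
def Feasible {n : ℕ} (d : ℕ) (h : MvPolynomial (Fin n) ℝ)
    (z : (Fin n →₀ ℕ) → Fin n → ℝ) : Prop :=
  (∀ α ∈ Delta d h, ∀ i, 0 ≤ z α i ∧ (z α i = 0 ↔ α i = 0)) ∧
  (∀ i, ∑ α ∈ Delta d h, z α i ≤ h.coeff (Finsupp.single i d)) ∧
  (∀ α ∈ Delta d h, wt α = d →
    ∏ i ∈ univ.filter (fun i => 0 < α i), (z α i / (α i : ℝ)) ^ (α i) =
      (h.coeff α / (d : ℝ)) ^ d)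

/-- The objective value `obj_h(z)`. -/
def obj {n : ℕ} (d : ℕ) (h : MvPolynomial (Fin n) ℝ)
    (z : (Fin n →₀ ℕ) → Fin n → ℝ) : ℝ :=
  ∑ α ∈ (Delta d h).filter (fun α => wt α < d),
    ((d : ℝ) - (wt α : ℝ)) *
      ((h.coeff α / (d : ℝ)) ^ d *
        ∏ i ∈ univ.filter (fun i => 0 < α i), ((α i : ℝ) / z α i) ^ (α i)) ^
        ((1 : ℝ) / ((d : ℝ) - (wt α : ℝ)))

/-- `ρ(h) = inf { obj_h(z) : z h-feasible }`, `+∞` if infeasible. -/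
def rho {n : ℕ} (d : ℕ) (h : MvPolynomial (Fin n) ℝ) : EReal :=
  sInf {r : EReal | ∃ z, Feasible d h z ∧ r = ((obj d h z : ℝ) : EReal)}

/-- `h_gp = h(0) - ρ(h)`. -/
def gp {n : ℕ} (d : ℕ) (h : MvPolynomial (Fin n) ℝ) : EReal :=
  ((h.coeff 0 : ℝ) : EReal) - rho d h

/-- `s(f,g) = sup { G(λ)_gp : λ ∈ [0,∞)^m }` where `G(λ) = f - Σ λⱼ gⱼ`. -/
def sBound {n m : ℕ} (d : ℕ) (f : MvPolynomial (Fin n) ℝ)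
    (g : Fin m → MvPolynomial (Fin n) ℝ) : EReal :=
  sSup {r : EReal | ∃ lam : Fin m → ℝ, (∀ j, 0 ≤ lam j) ∧
    r = gp d (f - ∑ j, C (lam j) * g j)}

/-- `Δ'(f)`: nonzero exponents `α` with `f_α ≠ 0` and `f_α x^α` not a square. -/
def Delta' {n : ℕ} (f : MvPolynomial (Fin n) ℝ) : Finset (Fin n →₀ ℕ) :=
  f.support.filter fun α => α ≠ 0 ∧ (f.coeff α < 0 ∨ ∃ i, Odd (α i))

/-- The trivial bound `f_{tr,N} = f(0) - Σ_{α ∈ Δ'(f)} |f_α| N^α`. -/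
def trivialBound {n : ℕ} (f : MvPolynomial (Fin n) ℝ) (N : Fin n → ℝ) : ℝ :=
  f.coeff 0 - ∑ α ∈ Delta' f, |f.coeff α| * ∏ i, N i ^ (α i)

lemma amgm_nat {ι : Type*} (F : Finset ι) (k : ι → ℕ) (a : ι → ℝ) (d : ℕ) (hd : 0 < d)
    (ha : ∀ i ∈ F, 0 ≤ a i) (hk : ∑ i ∈ F, k i = d) :
    ∏ i ∈ F, a i ^ k i ≤ ((∑ i ∈ F, (k i : ℝ) * a i) / d) ^ d := by
  have hd' : (0:ℝ) < d := by positivity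
  have hw1 : ∑ i ∈ F, (k i : ℝ)/(d:ℝ) = 1 := by
    rw [← Finset.sum_div, ← Nat.cast_sum, hk]
    exact div_self hd'.ne'
  have h1 := Real.geom_mean_le_arith_mean_weighted F (fun i => (k i : ℝ)/(d:ℝ)) a
      (fun i _ => by positivity) hw1 ha
  have hL : 0 ≤ ∏ i ∈ F, a i ^ ((k i : ℝ)/(d:ℝ)) :=
    Finset.prod_nonneg fun i hi => Real.rpow_nonneg (ha i hi) _
  have h2 := pow_le_pow_left₀ hL h1 d
  calc ∏ i ∈ F, a i ^ k i = (∏ i ∈ F, a i ^ ((k i : ℝ)/(d:ℝ))) ^ d := by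
        rw [← Finset.prod_pow]
        refine Finset.prod_congr rfl fun i hi => ?_
        rw [← Real.rpow_natCast (a i ^ ((k i:ℝ)/(d:ℝ))) d, ← Real.rpow_mul (ha i hi),
          div_mul_cancel₀ _ hd'.ne', Real.rpow_natCast]
    _ ≤ (∑ i ∈ F, (k i : ℝ)/(d:ℝ) * a i) ^ d := h2
    _ = ((∑ i ∈ F, (k i : ℝ) * a i)/(d:ℝ)) ^ d := by
        rw [Finset.sum_div]; congr 1; exact Finset.sum_congr rfl fun i _ => by ring

lemma amgm_slack {ι : Type*} (F : Finset ι) (k : ι → ℕ) (a : ι → ℝ) (b : ℝ) (M d : ℕ)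
    (hd : 0 < d) (ha : ∀ i ∈ F, 0 ≤ a i) (hb : 0 ≤ b)
    (hk : ∑ i ∈ F, k i + M = d) :
    (∏ i ∈ F, a i ^ k i) * b ^ M ≤ ((∑ i ∈ F, (k i : ℝ) * a i + (M:ℝ) * b) / d) ^ d := by
  classical
  set e : ι ↪ Option ι := ⟨some, Option.some_injective ι⟩ with he
  have hnone : (none : Option ι) ∉ F.map e := by simp [he]
  have key := amgm_nat (insert none (F.map e)) (fun o => o.elim M k) (fun o => o.elim b a) d hd
    (by
      intro o ho
      rcases Finset.mem_insert.mp ho with h | h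
      · subst h; exact hb
      · rcases Finset.mem_map.mp h with ⟨i, hi, rfl⟩
        exact ha i hi)
    (by rw [Finset.sum_insert hnone, Finset.sum_map]; simpa [he] using by omega)
  rw [Finset.prod_insert hnone, Finset.prod_map, Finset.sum_insert hnone, Finset.sum_map] at key
  simpa [he, mul_comm, add_comm] using key
lemma wt_eq_sum_univ {n : ℕ} (α : Fin n →₀ ℕ) : wt α = ∑ i, α i :=
  Finsupp.sum_fintype _ _ (fun _ => rfl)

lemma per_alpha {n d : ℕ} (hd : 0 < d) (hdeven : Even d)
    (α : Fin n →₀ ℕ) (c : ℝ) (zz : Fin n → ℝ) (x : Fin n → ℝ)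
    (hzz : ∀ i, 0 ≤ zz i ∧ (zz i = 0 ↔ α i = 0))
    (hwle : wt α ≤ d)
    (heq : wt α = d → ∏ i ∈ univ.filter (fun i => 0 < α i), (zz i / (α i : ℝ)) ^ (α i) = (c / (d:ℝ)) ^ d) :
    -(∑ i, zz i * x i ^ d) -
      (if wt α < d then ((d : ℝ) - (wt α : ℝ)) *
        ((c / (d:ℝ)) ^ d * ∏ i ∈ univ.filter (fun i => 0 < α i), ((α i : ℝ) / zz i) ^ (α i)) ^
          ((1:ℝ) / ((d:ℝ) - (wt α : ℝ))) else 0)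
      ≤ c * ∏ i, x i ^ α i := by
  classical
  have hd' : (0:ℝ) < d := by positivity
  set F : Finset (Fin n) := univ.filter (fun i => 0 < α i) with hF
  have hzpos : ∀ i ∈ F, 0 < zz i := by
    intro i hi
    have hαi : 0 < α i := (mem_filter.mp hi).2
    rcases (hzz i).1.lt_or_eq with h | h
    · exact h
    · exact absurd ((hzz i).2.mp h.symm) (by omega)
  have hwt : ∑ i ∈ F, α i = wt α := by
    rw [hF, Finset.sum_filter_of_ne (fun i _ h => Nat.pos_of_ne_zero h), wt_eq_sum_univ]
  set B : ℝ := ∑ i, zz i * x i ^ d with hBdef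
  have hBF : B = ∑ i ∈ F, zz i * x i ^ d := by
    rw [hBdef, eq_comm, hF]
    apply Finset.sum_filter_of_ne
    intro i _ hne
    have hz : zz i ≠ 0 := fun h => hne (by rw [h, zero_mul])
    have : α i ≠ 0 := fun h => hz ((hzz i).2.mpr h)
    exact Nat.pos_of_ne_zero this
  have hBnn : 0 ≤ B := Finset.sum_nonneg fun i _ =>
    mul_nonneg (hzz i).1 (hdeven.pow_nonneg _)
  set base : ℝ := (c / (d:ℝ)) ^ d * ∏ i ∈ F, ((α i : ℝ) / zz i) ^ (α i) with hbasedef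
  have hbase : 0 ≤ base :=
    mul_nonneg (hdeven.pow_nonneg _)
      (Finset.prod_nonneg fun i _ => pow_nonneg (div_nonneg (Nat.cast_nonneg _) (hzz i).1) _)
  set C : ℝ := (if wt α < d then ((d : ℝ) - (wt α : ℝ)) *
        base ^ ((1:ℝ) / ((d:ℝ) - (wt α : ℝ))) else 0) with hCdef
  have hCnn : 0 ≤ C := by
    rw [hCdef]
    split
    · next h =>
      have hwr : (wt α : ℝ) ≤ d := by exact_mod_cast hwle
      exact mul_nonneg (by linarith) (Real.rpow_nonneg hbase _)
    · exact le_refl 0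
  have key : c ^ d * ∏ i ∈ F, (x i ^ d) ^ (α i) ≤ (B + C) ^ d := by
    have hstep : (c/(d:ℝ))^d * ∏ i ∈ F, (x i ^ d) ^ (α i) ≤ ((B + C)/(d:ℝ)) ^ d := by
      have hanonneg : ∀ i ∈ F, 0 ≤ zz i * x i ^ d / (α i : ℝ) := fun i _ =>
        div_nonneg (mul_nonneg (hzz i).1 (hdeven.pow_nonneg _)) (Nat.cast_nonneg _)
      have hsum : ∑ i ∈ F, (α i : ℝ) * (zz i * x i ^ d / (α i : ℝ)) = B := by
        rw [hBF]
        refine Finset.sum_congr rfl fun i hi => ?_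
        have ha : (α i : ℝ) ≠ 0 := Nat.cast_ne_zero.mpr (mem_filter.mp hi).2.ne'
        field_simp
      rcases lt_or_eq_of_le hwle with hlt | heqd
      · -- slack case
        set M : ℕ := d - wt α with hM
        have hMpos : 0 < M := by omega
        have hcast : ((d : ℝ) - (wt α : ℝ)) = (M : ℝ) := by
          rw [hM, Nat.cast_sub hwle]
        set b : ℝ := base ^ ((1:ℝ) / (M:ℝ)) with hbdef
        have hb : 0 ≤ b := Real.rpow_nonneg hbase _
        have hbM : b ^ M = base := by
          rw [hbdef, ← Real.rpow_natCast (base ^ ((1:ℝ)/(M:ℝ))) M, ← Real.rpow_mul hbase,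
            one_div, inv_mul_cancel₀ (by positivity : ((M:ℕ):ℝ) ≠ 0), Real.rpow_one]
        have hC : C = (M:ℝ) * b := by
          rw [hCdef, if_pos hlt, hcast]
        have h1 := amgm_slack F α (fun i => zz i * x i ^ d / (α i : ℝ)) b M d hd
          hanonneg hb (by omega)
        beta_reduce at h1
        have hprod : (∏ i ∈ F, (zz i * x i ^ d / (α i : ℝ)) ^ (α i)) * b ^ M
            = (c/(d:ℝ))^d * ∏ i ∈ F, (x i ^ d) ^ (α i) := by
          rw [hbM, hbasedef, mul_comm ((c/(d:ℝ))^d) _, ← mul_assoc, ← Finset.prod_mul_distrib,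
            mul_comm]
          congr 1
          refine Finset.prod_congr rfl fun i hi => ?_
          rw [← mul_pow]
          congr 1
          have hzne := (hzpos i hi).ne'
          have ha : (α i : ℝ) ≠ 0 := Nat.cast_ne_zero.mpr (mem_filter.mp hi).2.ne'
          field_simp
        rw [hsum, hprod, ← hC] at h1
        exact h1
      · -- equality case
        have hC : C = 0 := by rw [hCdef, if_neg (by omega)]
        have h1 := amgm_nat F α (fun i => zz i * x i ^ d / (α i : ℝ)) d hd hanonneg (by omega)
        beta_reduce at h1
        have hprod : (∏ i ∈ F, (zz i * x i ^ d / (α i : ℝ)) ^ (α i))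
            = (c/(d:ℝ))^d * ∏ i ∈ F, (x i ^ d) ^ (α i) := by
          have hfac : ∀ i ∈ F, (zz i * x i ^ d / (α i : ℝ)) ^ (α i)
              = (zz i / (α i : ℝ)) ^ (α i) * (x i ^ d) ^ (α i) := by
            intro i hi
            rw [← mul_pow]
            congr 1
            ring
          rw [Finset.prod_congr rfl hfac, Finset.prod_mul_distrib, heq heqd]
        rw [hsum, hprod] at h1
        rw [hC, add_zero]
        exact h1
    have hdd : (0:ℝ) < (d:ℝ)^d := by positivity
    calc c ^ d * ∏ i ∈ F, (x i ^ d) ^ (α i)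
        = (c/(d:ℝ))^d * (∏ i ∈ F, (x i ^ d) ^ (α i)) * (d:ℝ)^d := by
          rw [div_pow]; field_simp
      _ ≤ ((B + C)/(d:ℝ))^d * (d:ℝ)^d := mul_le_mul_of_nonneg_right hstep hdd.le
      _ = (B + C)^d := by rw [div_pow]; field_simp
  have habs : |c * ∏ i, x i ^ α i| ≤ B + C := by
    have h2 : |c * ∏ i, x i ^ α i| ^ d = c ^ d * ∏ i ∈ F, (x i ^ d) ^ (α i) := by
      rw [hdeven.pow_abs, mul_pow, ← Finset.prod_pow]
      congr 1
      rw [show (∏ i, (x i ^ α i) ^ d) = ∏ i, (x i ^ d) ^ (α i) from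
        Finset.prod_congr rfl fun i _ => by rw [← pow_mul, ← pow_mul, Nat.mul_comm]]
      rw [hF]
      exact (Finset.prod_filter_of_ne fun i _ h =>
        Nat.pos_of_ne_zero fun h0 => h (by rw [h0, pow_zero])).symm
    refine le_of_pow_le_pow_left₀ hd.ne' (add_nonneg hBnn hCnn) ?_
    rw [h2]
    exact key
  have h3 : -(B + C) ≤ c * ∏ i, x i ^ α i := (neg_le_neg habs).trans (neg_abs_le _)
  linarith
lemma core {n d : ℕ} (hd2 : 2 ≤ d) (hdeven : Even d) (h : MvPolynomial (Fin n) ℝ)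
    (hdeg : h.totalDegree ≤ d) (z : (Fin n →₀ ℕ) → Fin n → ℝ) (hz : Feasible d h z)
    (x : Fin n → ℝ) :
    h.coeff 0 - obj d h z ≤ eval x h := by
  classical
  have hd : 0 < d := by omega
  obtain ⟨hz1, hz2, hz3⟩ := hz
  set D := Delta d h with hD
  have hDsub : D ⊆ h.support := Finset.filter_subset _ _
  set T : (Fin n →₀ ℕ) → ℝ := fun α => h.coeff α * ∏ i, x i ^ α i with hT
  have heval : eval x h = ∑ α ∈ h.support \ D, T α + ∑ α ∈ D, T α := by
    rw [Finset.sum_sdiff hDsub, eval_eq']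
  -- objterm
  set objterm : (Fin n →₀ ℕ) → ℝ := fun α =>
    if wt α < d then ((d : ℝ) - (wt α : ℝ)) *
        ((h.coeff α / (d:ℝ)) ^ d *
          ∏ i ∈ univ.filter (fun i => 0 < α i), ((α i : ℝ) / z α i) ^ (α i)) ^
          ((1:ℝ) / ((d:ℝ) - (wt α : ℝ))) else 0 with hobjterm
  have hobj : obj d h z = ∑ α ∈ D, objterm α := by
    rw [obj, Finset.sum_filter]
  -- Step: per-alpha bound summed over D
  have hDbound : -(∑ α ∈ D, ∑ i, z α i * x i ^ d) - obj d h z ≤ ∑ α ∈ D, T α := by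
    rw [hobj, ← Finset.sum_neg_distrib, ← Finset.sum_sub_distrib]
    apply Finset.sum_le_sum
    intro α hα
    have hwle : wt α ≤ d := ((Finset.mem_filter.mp hα).2).1
    exact per_alpha hd hdeven α (h.coeff α) (z α) x (hz1 α hα) hwle (hz3 α hα)
  -- Step: the rest of the support
  set Bset : Finset (Fin n →₀ ℕ) :=
    insert 0 (univ.image fun i => Finsupp.single i d) with hBset
  have hBnotD : ∀ α ∈ Bset, α ∉ D := by
    intro α hα hαD
    have hprop := (Finset.mem_filter.mp hαD).2
    rcases Finset.mem_insert.mp hα with rfl | hα'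
    · exact hprop.2.1 rfl
    · rcases Finset.mem_image.mp hα' with ⟨i, _, rfl⟩
      exact hprop.2.2.1 i rfl
  have hsingle : ∀ i : Fin n, T (Finsupp.single i d) = h.coeff (Finsupp.single i d) * x i ^ d := by
    intro i
    simp only [hT]
    congr 1
    rw [Finset.prod_eq_single i (fun j _ hj => by
        rw [Finsupp.single_apply, if_neg (fun hh => hj hh.symm), pow_zero])
      (fun hi => absurd (Finset.mem_univ i) hi)]
    rw [Finsupp.single_apply, if_pos rfl]
  have hzero_not : (0 : Fin n →₀ ℕ) ∉ univ.image (fun i => Finsupp.single i (d:ℕ)) := by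
    simp only [Finset.mem_image, Finset.mem_univ, true_and, not_exists]
    intro i hh
    exact hd.ne' (Finsupp.single_eq_zero.mp hh)
  have hBsum : ∑ α ∈ Bset, T α = h.coeff 0 + ∑ i, h.coeff (Finsupp.single i d) * x i ^ d := by
    rw [hBset, Finset.sum_insert hzero_not,
      Finset.sum_image (fun i _ j _ hij => Finsupp.single_left_injective hd.ne' hij)]
    congr 1
    · simp [hT]
    · exact Finset.sum_congr rfl fun i _ => hsingle i
  have hS1 : h.coeff 0 + ∑ i, h.coeff (Finsupp.single i d) * x i ^ d ≤ ∑ α ∈ h.support \ D, T α := by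
    set E := h.support \ D with hE
    have hsplit : ∑ α ∈ E, T α = ∑ α ∈ E ∩ Bset, T α + ∑ α ∈ E \ Bset, T α :=
      (Finset.sum_inter_add_sum_sdiff E Bset T).symm
    have hnonneg : ∀ α ∈ E \ Bset, 0 ≤ T α := by
      intro α hα
      obtain ⟨hαE, hαB⟩ := Finset.mem_sdiff.mp hα
      obtain ⟨hαs, hαD⟩ := Finset.mem_sdiff.mp hαE
      have hwle : wt α ≤ d := le_trans (Finset.le_sup hαs) hdeg
      have hne0 : α ≠ 0 := fun hh => hαB (hh ▸ Finset.mem_insert_self _ _)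
      have hnesingle : ∀ i, α ≠ Finsupp.single i d := fun i hh =>
        hαB (hh ▸ Finset.mem_insert_of_mem (Finset.mem_image.mpr ⟨i, Finset.mem_univ i, rfl⟩))
      have hnot : ¬(h.coeff α < 0 ∨ ∃ i, Odd (α i)) := by
        intro hcon
        exact hαD (Finset.mem_filter.mpr ⟨hαs, hwle, hne0, hnesingle, hcon⟩)
      push_neg at hnot
      obtain ⟨hc0, hodd⟩ := hnot
      apply mul_nonneg hc0
      exact Finset.prod_nonneg fun i _ => (Nat.not_odd_iff_even.mp (hodd i)).pow_nonneg _
    have hEB : ∑ α ∈ E ∩ Bset, T α = ∑ α ∈ Bset, T α := by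
      apply Finset.sum_subset Finset.inter_subset_right
      intro α hαB hαnEB
      have hαnE : α ∉ E := fun hh => hαnEB (Finset.mem_inter.mpr ⟨hh, hαB⟩)
      have hαns : α ∉ h.support := fun hh =>
        hαnE (Finset.mem_sdiff.mpr ⟨hh, hBnotD α hαB⟩)
      simp only [hT]
      rw [MvPolynomial.notMem_support_iff.mp hαns, zero_mul]
    rw [hsplit, hEB, hBsum]
    have := Finset.sum_nonneg hnonneg
    linarith
  have hswap : ∑ α ∈ D, ∑ i, z α i * x i ^ d = ∑ i, (∑ α ∈ D, z α i) * x i ^ d := by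
    rw [Finset.sum_comm]
    exact Finset.sum_congr rfl fun i _ => (Finset.sum_mul _ _ _).symm
  have hfinal : ∑ i, (∑ α ∈ D, z α i) * x i ^ d ≤ ∑ i, h.coeff (Finsupp.single i d) * x i ^ d :=
    Finset.sum_le_sum fun i _ =>
      mul_le_mul_of_nonneg_right (hz2 i) (hdeven.pow_nonneg _)
  rw [heval]
  rw [hswap] at hDbound
  linarith
lemma Gdeg {n m d : ℕ} (f : MvPolynomial (Fin n) ℝ) (g : Fin m → MvPolynomial (Fin n) ℝ)
    (hf : f.totalDegree ≤ d) (hg : ∀ j, (g j).totalDegree ≤ d) (lam : Fin m → ℝ) :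
    (f - ∑ j, C (lam j) * g j).totalDegree ≤ d := by
  rw [sub_eq_add_neg]
  apply le_trans (MvPolynomial.totalDegree_add _ _)
  apply max_le hf
  rw [MvPolynomial.totalDegree_neg]
  apply le_trans (MvPolynomial.totalDegree_finset_sum _ _)
  apply Finset.sup_le
  intro j _
  calc (C (lam j) * g j).totalDegree ≤ (C (lam j)).totalDegree + (g j).totalDegree :=
        MvPolynomial.totalDegree_mul _ _
    _ ≤ d := by rw [MvPolynomial.totalDegree_C]; simpa using hg j

lemma Geval {n m : ℕ} (f : MvPolynomial (Fin n) ℝ) (g : Fin m → MvPolynomial (Fin n) ℝ)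
    (lam : Fin m → ℝ) (hlam : ∀ j, 0 ≤ lam j) (x : Fin n → ℝ) (hx : ∀ j, 0 ≤ eval x (g j)) :
    eval x (f - ∑ j, C (lam j) * g j) ≤ eval x f := by
  rw [map_sub, map_sum]
  have : 0 ≤ ∑ j, eval x (C (lam j) * g j) :=
    Finset.sum_nonneg fun j _ => by
      rw [map_mul, eval_C]; exact mul_nonneg (hlam j) (hx j)
  linarith

lemma main_ineq {n m d : ℕ} (hd2 : 2 ≤ d) (hdeven : Even d)
    (f : MvPolynomial (Fin n) ℝ) (g : Fin m → MvPolynomial (Fin n) ℝ)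
    (hf : f.totalDegree ≤ d) (hg : ∀ j, (g j).totalDegree ≤ d)
    (lam : Fin m → ℝ) (hlam : ∀ j, 0 ≤ lam j)
    (z : (Fin n →₀ ℕ) → Fin n → ℝ)
    (hz : Feasible d (f - ∑ j, C (lam j) * g j) z)
    (x : Fin n → ℝ) (hx : ∀ j, 0 ≤ eval x (g j)) :
    (f - ∑ j, C (lam j) * g j).coeff 0 - obj d (f - ∑ j, C (lam j) * g j) z ≤ eval x f :=
  le_trans (core hd2 hdeven _ (Gdeg f g hf hg lam) z hz x) (Geval f g lam hlam x hx)


/-- if `z` is `G(λ)`-feasible then `f(x) ≥ G(λ)(0) - obj_{G(λ)}(z)`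
on `K_g`; consequently `s(f,g)` is a lower bound for `f` on `K_g`. -/
theorem stmt_5 (n m d : ℕ) (hd2 : 2 ≤ d) (hdeven : Even d)
    (f : MvPolynomial (Fin n) ℝ) (g : Fin m → MvPolynomial (Fin n) ℝ)
    (hf : f.totalDegree ≤ d) (hg : ∀ j, (g j).totalDegree ≤ d)
    (lam : Fin m → ℝ) (hlam : ∀ j, 0 ≤ lam j)
    (z : (Fin n →₀ ℕ) → Fin n → ℝ)
    (hz : Feasible d (f - ∑ j, C (lam j) * g j) z) :
    (∀ x : Fin n → ℝ, (∀ j, 0 ≤ eval x (g j)) →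
      (f - ∑ j, C (lam j) * g j).coeff 0 - obj d (f - ∑ j, C (lam j) * g j) z
        ≤ eval x f) ∧
    (∀ x : Fin n → ℝ, (∀ j, 0 ≤ eval x (g j)) →
      sBound d f g ≤ ((eval x f : ℝ) : EReal)) := by
  constructor
  · intro x hx
    exact main_ineq hd2 hdeven f g hf hg lam hlam z hz x hx
  · intro x hx
    apply sSup_le
    rintro r ⟨lam', hlam', rfl⟩
    set h' := f - ∑ j, C (lam' j) * g j with hh'
    have hrho : ((h'.coeff 0 - eval x f : ℝ) : EReal) ≤ rho d h' := by
      apply le_sInf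
      rintro b ⟨z', hz', rfl⟩
      rw [EReal.coe_le_coe_iff]
      have := main_ineq hd2 hdeven f g hf hg lam' hlam' z' hz' x hx
      linarith
    calc gp d h' = ((h'.coeff 0 : ℝ) : EReal) - rho d h' := rfl
      _ ≤ ((h'.coeff 0 : ℝ) : EReal) - ((h'.coeff 0 - eval x f : ℝ) : EReal) :=
          EReal.sub_le_sub (le_refl _) hrho
      _ = ((eval x f : ℝ) : EReal) := by
          rw [← EReal.coe_sub]
          norm_num
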